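/- If E is not a parent of Y, then the set PA_Y of parents of Y is invariant; in particular, the collection I of invariant sets is nonempty. -/
import Mathlib


/-- Nodes of the graph: the environment node `E`, predictor nodes `V j` for
`j ∈ {1, …, d}` (represented by `Fin d`), and the response node `Y`. -/
inductive Node (d : ℕ) : Type where
  | E : Node d
  | V : Fin d → Node d
  | Y : Node d
deriving DecidableEq

/-- A directed acyclic graph on `{E} ∪ {1, …, d} ∪ {Y}` in which `E` has no
parents (`E` is exogenous). -/
structure CGraph (d : ℕ) where
  adj : Node d → Node d → Prop
  acyclic : ∀ v, ¬ Relation.TransGen adj v v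
  exogenous : ∀ v, ¬ adj v Node.E

namespace CGraph

variable {d : ℕ} (G : CGraph d)

/-- Undirected adjacency: an edge between `u` and `v` in either direction. -/
def Edge (u v : Node d) : Prop := G.adj u v ∨ G.adj v u

/-- `p` is a path between `a` and `b`: a duplicate-free list of nodes starting
at `a`, ending at `b`, with consecutive nodes adjacent (in either direction). -/
def IsPath (p : List (Node d)) (a b : Node d) : Prop :=
  p.head? = some a ∧ p.getLast? = some b ∧ p.Nodup ∧ p.Chain' G.Edge

/-- `x` is a (strict) descendant of `v`. -/
def Desc (v x : Node d) : Prop := Relation.TransGen G.adj v x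

/-- The consecutive triple `u, m, w` on a path blocks the path given `C`:
either `m` is a non-collider lying in `C`, or `m` is a collider such that
neither `m` nor any of its descendants lies in `C`. -/
def BlockedAt (C : Set (Node d)) (u m w : Node d) : Prop :=
  (¬ (G.adj u m ∧ G.adj w m) ∧ m ∈ C) ∨
  ((G.adj u m ∧ G.adj w m) ∧ m ∉ C ∧ ∀ x, G.Desc m x → x ∉ C)

/-- A path `p` is blocked by `C` if some consecutive triple on it blocks it. -/
def Blocked (C : Set (Node d)) (p : List (Node d)) : Prop :=
  ∃ q u m w r, p = q ++ u :: m :: w :: r ∧ G.BlockedAt C u m w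

/-- `a` and `b` are d-separated given `C`: every path between them is blocked. -/
def DSep (a b : Node d) (C : Set (Node d)) : Prop :=
  ∀ p, G.IsPath p a b → G.Blocked C p

/-- `S ⊆ {1, …, d}` is invariant if `E` and `Y` are d-separated given `S`. -/
def Invariant (S : Set (Fin d)) : Prop := G.DSep Node.E Node.Y (Node.V '' S)

/-- `S` is minimally invariant if it is invariant and no strict subset of `S`
is invariant. -/
def MinInvariant (S : Set (Fin d)) : Prop :=
  G.Invariant S ∧ ∀ S', S' ⊂ S → ¬ G.Invariant S'

/-- `S_AS`: the union of all minimally invariant sets. -/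
def SAS : Set (Fin d) := ⋃₀ {S | G.MinInvariant S}

/-- `S_ICP`: the intersection of all invariant sets (`∅` if there are none). -/
def SICP : Set (Fin d) :=
  {j | (∃ S, G.Invariant S) ∧ ∀ S, G.Invariant S → j ∈ S}

/-- `S_AS^m`: the union of all minimally invariant sets of cardinality `≤ m`. -/
def SASm (m : ℕ) : Set (Fin d) := ⋃₀ {S | G.MinInvariant S ∧ S.ncard ≤ m}

/-- The parents of `Y` among `{1, …, d}`. -/
def paY : Set (Fin d) := {j | G.adj (Node.V j) Node.Y}

/-- The children of `E` among `{1, …, d}`. -/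
def chE : Set (Fin d) := {j | G.adj Node.E (Node.V j)}

/-- The ancestors of `Y` among `{1, …, d}`. -/
def anY : Set (Fin d) := {j | Relation.TransGen G.adj (Node.V j) Node.Y}

/-- `PA(A)`: the union of the parent sets of the elements of `A ⊆ {1, …, d}`. -/
def paOf (A : Set (Fin d)) : Set (Fin d) := {j | ∃ i ∈ A, G.adj (Node.V j) (Node.V i)}

end CGraph

section Aux

variable {d : ℕ} (G : CGraph d)

lemma aux_no2cycle {a b : Node d} (h1 : G.adj a b) (h2 : G.adj b a) : False :=
  G.acyclic a ((Relation.TransGen.single h1).tail h2)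

lemma aux_descY_notC {z : Node d} (hz : Relation.TransGen G.adj Node.Y z) :
    z ∉ Node.V '' G.paY := by
  rintro ⟨j, hj, rfl⟩
  exact G.acyclic Node.Y (hz.trans (Relation.TransGen.single hj))

lemma aux_head?_stable (l : List (Node d)) (a : Node d) (l₁ l₂ : List (Node d)) :
    (l ++ a :: l₁).head? = (l ++ a :: l₂).head? := by
  cases l <;> simp

lemma aux_collider_blocked {q : List (Node d)} {w z r : Node d} {t : List (Node d)}
    (hwz : G.adj w z) (hrz : G.adj r z)
    (hz : Relation.TransGen G.adj Node.Y z) :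
    G.Blocked (Node.V '' G.paY) (q ++ w :: z :: r :: t) :=
  ⟨q, w, z, r, t, rfl, Or.inr ⟨⟨hwz, hrz⟩, aux_descY_notC G hz,
    fun _ hx => aux_descY_notC G (hz.trans hx)⟩⟩

lemma aux_key (q : List (Node d)) : ∀ (w z r : Node d) (t : List (Node d)),
    (q ++ [w]).head? = some Node.E →
    (q ++ w :: z :: r :: t).Chain' G.Edge →
    G.adj r z → Relation.TransGen G.adj Node.Y z →
    G.Blocked (Node.V '' G.paY) (q ++ w :: z :: r :: t) := by
  induction q using List.reverseRecOn with
  | nil =>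
    intro w z r t hh hc hrz hz
    simp at hh
    subst hh
    have hedge : G.Edge Node.E z := (List.isChain_cons_cons.mp hc).1
    cases hedge with
    | inl hwz => exact aux_collider_blocked G hwz hrz hz
    | inr hzw => exact absurd hzw (G.exogenous z)
  | append_singleton q' u ih =>
    intro w z r t hh hc hrz hz
    have hsuf : (w :: z :: r :: t).Chain' G.Edge := (List.isChain_append.mp hc).2.1
    have hedge : G.Edge w z := (List.isChain_cons_cons.mp hsuf).1
    cases hedge with
    | inl hwz => exact aux_collider_blocked G hwz hrz hz
    | inr hzw =>
      have heq : (q' ++ [u]) ++ w :: z :: r :: t = q' ++ u :: w :: z :: r :: t := by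
        simp
      rw [heq] at hc ⊢
      have hh' : (q' ++ [u]).head? = some Node.E := by
        have := aux_head?_stable q' u ([] : List (Node d)) [w]
        rw [show q' ++ [u] = q' ++ u :: ([] : List (Node d)) from rfl, this]
        simpa using hh
      exact ih u w z (r :: t) hh' hc hzw (hz.tail hzw)

lemma aux_step2 (hEY : ¬ G.adj Node.E Node.Y) (q : List (Node d)) (w : Node d)
    (hh : (q ++ [w]).head? = some Node.E)
    (hc : (q ++ [w, Node.Y]).Chain' G.Edge) :
    G.Blocked (Node.V '' G.paY) (q ++ [w, Node.Y]) := by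
  have hsuf : ([w, Node.Y] : List (Node d)).Chain' G.Edge := (List.isChain_append.mp hc).2.1
  have hedge : G.Edge w Node.Y := (List.isChain_cons_cons.mp hsuf).1
  rcases q.eq_nil_or_concat with rfl | ⟨q', u, rfl⟩
  · simp at hh
    subst hh
    cases hedge with
    | inl h1 => exact absurd h1 hEY
    | inr h2 => exact absurd h2 (G.exogenous _)
  · simp only [List.concat_eq_append] at hh hc ⊢
    cases hedge with
    | inl hwY =>
      have hwC : w ∈ Node.V '' G.paY := by
        cases w with
        | E => exact absurd hwY hEY
        | Y => exact absurd (Relation.TransGen.single hwY) (G.acyclic _)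
        | V j => exact ⟨j, hwY, rfl⟩
      refine ⟨q', u, w, Node.Y, [], by simp, Or.inl ⟨?_, hwC⟩⟩
      rintro ⟨-, hYw⟩
      exact aux_no2cycle G hwY hYw
    | inr hYw =>
      have heq : (q' ++ [u]) ++ [w, Node.Y]
          = q' ++ u :: w :: Node.Y :: ([] : List (Node d)) := by simp
      rw [heq] at hc ⊢
      have hh' : (q' ++ [u]).head? = some Node.E := by
        have := aux_head?_stable q' u ([] : List (Node d)) [w]
        rw [show q' ++ [u] = q' ++ u :: ([] : List (Node d)) from rfl, this]
        simpa using hh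
      exact aux_key G q' u w Node.Y [] hh' hc hYw (Relation.TransGen.single hYw)

end Aux

/-- if `E` is not a parent of `Y`, then `PA_Y` is invariant; in
particular, the collection of invariant sets is nonempty. -/
theorem paY_invariant {d : ℕ} (G : CGraph d) (h : ¬ G.adj Node.E Node.Y) :
    G.Invariant G.paY ∧ {S : Set (Fin d) | G.Invariant S}.Nonempty := by
  have inv : G.Invariant G.paY := by
    intro p hp
    obtain ⟨hhead, hlast, _hnd, hchain⟩ := hp
    rcases p.eq_nil_or_concat with rfl | ⟨L, b, rfl⟩
    all_goals try simp only [List.concat_eq_append] at hhead hlast hchain ⊢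
    · simp at hhead
    · have hbY : b = Node.Y := by
        rw [List.getLast?_concat] at hlast
        exact Option.some_injective _ hlast
      subst hbY
      rcases L.eq_nil_or_concat with rfl | ⟨M, c, rfl⟩
      all_goals try simp only [List.concat_eq_append] at hhead hlast hchain ⊢
      · simp at hhead
      · have hh' : (M ++ [c]).head? = some Node.E := by
          have := aux_head?_stable M c ([] : List (Node d)) [Node.Y]
          rw [show M ++ [c] = M ++ c :: ([] : List (Node d)) from rfl, this]
          simpa using hhead
        have heq : (M ++ [c]) ++ [Node.Y] = M ++ [c, Node.Y] := by simp
        rw [heq] at hchain ⊢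
        exact aux_step2 G h M c hh' hchain
  exact ⟨inv, ⟨G.paY, inv⟩⟩
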